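/- arXiv:1710.09498 — 7 statements merged into one kernel-verified Lean document; each statement's English description precedes it below -/
import Mathlib

section
/- Let X be an n×n real matrix with all entries nonzero. Then X satisfies social balance (i.e., X_ii > 0 for all i, and sign(X_ij)·sign(X_jk)·sign(X_ki) = 1 for all i,j,k) if and only if X_ii > 0 for all i and for every pair i,j, either sign(X_ik) = sign(X_jk) for all k, or sign(X_ik) = -sign(X_jk) for all k. -/
theorem social_balance_iff_row_sign_pattern {n : ℕ} (X : Matrix (Fin n) (Fin n) ℝ)
    (hX : ∀ i j, X i j ≠ 0) :
    ((∀ i, 0 < X i i) ∧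
      ∀ i j k, Real.sign (X i j) * Real.sign (X j k) * Real.sign (X k i) = 1) ↔
    ((∀ i, 0 < X i i) ∧
      ∀ i j, (∀ k, Real.sign (X i k) = Real.sign (X j k)) ∨
             (∀ k, Real.sign (X i k) = - Real.sign (X j k))) := by
  have hpm : ∀ i j, Real.sign (X i j) = 1 ∨ Real.sign (X i j) = -1 := by
    intro i j
    rcases Real.sign_apply_eq_of_ne_zero _ (hX i j) with h | h
    · exact Or.inr h
    · exact Or.inl h
  constructor
  · rintro ⟨hd, ht⟩
    refine ⟨hd, fun i j => ?_⟩
    have hsym : ∀ a b, Real.sign (X a b) = Real.sign (X b a) := by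
      intro a b
      have h := ht a b a
      rw [Real.sign_of_pos (hd a)] at h
      rcases hpm a b with h1 | h1 <;> rcases hpm b a with h2 | h2 <;>
        rw [h1, h2] at h ⊢ <;> norm_num at h <;> norm_num
    have key : ∀ k, Real.sign (X i k) = Real.sign (X i j) * Real.sign (X j k) := by
      intro k
      have h := ht i j k
      rw [← hsym i k] at h
      rcases hpm i j with h1 | h1 <;> rcases hpm j k with h2 | h2 <;>
        rcases hpm i k with h3 | h3 <;> rw [h1, h2, h3] at h ⊢ <;> norm_num at h <;> norm_num
    rcases hpm i j with h1 | h1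
    · left; intro k; rw [key k, h1, one_mul]
    · right; intro k; rw [key k, h1, neg_one_mul]
  · rintro ⟨hd, hr⟩
    have hsym : ∀ a b, Real.sign (X a b) = Real.sign (X b a) := by
      intro a b
      rcases hr a b with h | h
      · rw [h b, Real.sign_of_pos (hd b)]
        have := h a
        rw [Real.sign_of_pos (hd a)] at this
        rw [← this]
      · rw [h b, Real.sign_of_pos (hd b)]
        have := h a
        rw [Real.sign_of_pos (hd a)] at this
        rw [show Real.sign (X b a) = -1 by linarith]
    refine ⟨hd, fun i j k => ?_⟩
    have h1 := hsym i k
    rcases hr i j with h | h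
    · have hij := h j
      rw [Real.sign_of_pos (hd j)] at hij
      have hik := h k
      rw [hij, one_mul, ← h1, hik]
      rcases hpm j k with h2 | h2 <;> rw [h2] <;> norm_num
    · have hij := h j
      rw [Real.sign_of_pos (hd j)] at hij
      have hik := h k
      rw [hij, ← h1, hik]
      rcases hpm j k with h2 | h2 <;> rw [h2] <;> norm_num
end

section
/- Let X ∈ ℝ^{n×n} have all entries nonzero and satisfy social balance. Then X⁺ = f(X) = diag(|X|1_n)⁻¹ X Xᵀ has all entries nonzero, satisfies sign(X⁺) = sign(X), and hence G(X⁺) also satisfies social balance. -/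
noncomputable def fHbM {n : ℕ} (X : Matrix (Fin n) (Fin n) ℝ) : Matrix (Fin n) (Fin n) ℝ :=
  fun i j => (∑ k, X i k * X j k) / (∑ k, |X i k|)

theorem fHbM_preserves_social_balance {n : ℕ} (X : Matrix (Fin n) (Fin n) ℝ)
    (hX : ∀ i j, X i j ≠ 0)
    (hdiag : ∀ i, 0 < X i i)
    (hbal : ∀ i j k, Real.sign (X i j) * Real.sign (X j k) * Real.sign (X k i) = 1) :
    (∀ i j, fHbM X i j ≠ 0) ∧
    (∀ i j, Real.sign (fHbM X i j) = Real.sign (X i j)) ∧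
    (∀ i, 0 < fHbM X i i) ∧
    (∀ i j k, Real.sign (fHbM X i j) * Real.sign (fHbM X j k) * Real.sign (fHbM X k i) = 1) := by
  have hs1 : ∀ i j, Real.sign (X i j) = 1 ∨ Real.sign (X i j) = -1 := by
    intro i j
    rcases lt_trichotomy (X i j) 0 with h | h | h
    · exact Or.inr (Real.sign_of_neg h)
    · exact absurd h (hX i j)
    · exact Or.inl (Real.sign_of_pos h)
  have hsq : ∀ i j, Real.sign (X i j) * Real.sign (X i j) = 1 := by
    intro i j; rcases hs1 i j with h | h <;> rw [h] <;> ring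
  have hdiag1 : ∀ i, Real.sign (X i i) = 1 := fun i => Real.sign_of_pos (hdiag i)
  have hsym : ∀ i j, Real.sign (X j i) = Real.sign (X i j) := by
    intro i j
    have h := hbal i j j
    rw [hdiag1 j] at h
    linear_combination Real.sign (X i j) * h - Real.sign (X j i) * hsq i j
  have hmul : ∀ i j k, Real.sign (X i k) * Real.sign (X j k) = Real.sign (X i j) := by
    intro i j k
    have h := hbal i j k
    rw [← hsym k i] at h
    linear_combination Real.sign (X i j) * h - Real.sign (X i k) * Real.sign (X j k) * hsq i j
  have hsa : ∀ i k, Real.sign (X i k) * |X i k| = X i k := by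
    intro i k
    rcases lt_trichotomy (X i k) 0 with h | h | h
    · rw [Real.sign_of_neg h, abs_of_neg h]; ring
    · exact absurd h (hX i k)
    · rw [Real.sign_of_pos h, abs_of_pos h]; ring
  have habs : ∀ i k, 0 < |X i k| := fun i k => abs_pos.mpr (hX i k)
  have hnum : ∀ i j, (∑ k, X i k * X j k)
      = Real.sign (X i j) * ∑ k, |X i k| * |X j k| := by
    intro i j
    rw [Finset.mul_sum]
    apply Finset.sum_congr rfl
    intro k _
    calc X i k * X j k = (Real.sign (X i k) * |X i k|) * (Real.sign (X j k) * |X j k|) := by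
          rw [hsa i k, hsa j k]
      _ = (Real.sign (X i k) * Real.sign (X j k)) * (|X i k| * |X j k|) := by ring
      _ = Real.sign (X i j) * (|X i k| * |X j k|) := by rw [hmul i j k]
  have hF : ∀ i j, fHbM X i j
      = Real.sign (X i j) * ((∑ k, |X i k| * |X j k|) / (∑ k, |X i k|)) := by
    intro i j
    show (∑ k, X i k * X j k) / (∑ k, |X i k|) = _
    rw [hnum i j, mul_div_assoc]
  have hpos : ∀ i j : Fin n, 0 < (∑ k, |X i k| * |X j k|) / (∑ k, |X i k|) := by
    intro i j
    apply div_pos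
    · exact Finset.sum_pos (fun k _ => mul_pos (habs i k) (habs j k)) ⟨i, Finset.mem_univ i⟩
    · exact Finset.sum_pos (fun k _ => habs i k) ⟨i, Finset.mem_univ i⟩
  have hsign : ∀ i j, Real.sign (fHbM X i j) = Real.sign (X i j) := by
    intro i j
    rw [hF i j]
    rcases hs1 i j with h | h
    · rw [h, one_mul]
      exact Real.sign_of_pos (hpos i j)
    · rw [h]
      have : (-1 : ℝ) * ((∑ k, |X i k| * |X j k|) / (∑ k, |X i k|)) < 0 := by
        have := hpos i j; linarith
      rw [Real.sign_of_neg this]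
  refine ⟨?_, hsign, ?_, ?_⟩
  · intro i j
    rw [hF i j]
    rcases hs1 i j with h | h <;> rw [h] <;> [skip; skip] <;>
      · have := hpos i j
        intro hc
        nlinarith
  · intro i
    rw [hF i i, hdiag1 i, one_mul]
    exact hpos i i
  · intro i j k
    rw [hsign i j, hsign j k, hsign k i]
    exact hbal i j k
end

section
/- Let X ∈ ℝ^{n×n} have all entries nonzero and satisfy social balance, and let X⁺ = diag(|X|1_n)⁻¹ X Xᵀ. Then min_{i,j}|X⁺_ij| ≥ min_{i,j}|X_ij| and max_{i,j}|X⁺_ij| ≤ max_{i,j}|X_ij|. -/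
noncomputable def maxNorm {n : ℕ} (X : Matrix (Fin n) (Fin n) ℝ) : ℝ :=
  ⨆ i, ⨆ j, |X i j|

noncomputable def minNorm {n : ℕ} (X : Matrix (Fin n) (Fin n) ℝ) : ℝ :=
  ⨅ i, ⨅ j, |X i j|

theorem fHbM_min_max_monotone {n : ℕ} (X : Matrix (Fin n) (Fin n) ℝ)
    (hX : ∀ i j, X i j ≠ 0)
    (hdiag : ∀ i, 0 < X i i)
    (hbal : ∀ i j k, Real.sign (X i j) * Real.sign (X j k) * Real.sign (X k i) = 1) :
    minNorm X ≤ minNorm (fHbM X) ∧ maxNorm (fHbM X) ≤ maxNorm X := by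
  rcases Nat.eq_zero_or_pos n with hn | hn
  · subst hn
    simp [minNorm, maxNorm]
  · haveI : Nonempty (Fin n) := ⟨⟨0, hn⟩⟩
    set i0 : Fin n := ⟨0, hn⟩ with hi0
    set s : Fin n → ℝ := fun i => Real.sign (X i i0) with hs
    have hsq : ∀ (x : ℝ), x ≠ 0 → Real.sign x * Real.sign x = 1 := by
      intro x hx
      rcases Real.sign_apply_eq_of_ne_zero x hx with h | h <;> rw [h] <;> norm_num
    have hsign : ∀ i j, Real.sign (X i j) = s i * s j := by
      intro i j
      have h := hbal i j i0
      have h0 := hbal i0 i i0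
      have h1 := hsq (X i i0) (hX i i0)
      have h2 := hsq (X j i0) (hX j i0)
      have h5 : Real.sign (X i0 i0) = 1 := Real.sign_of_pos (hdiag i0)
      rw [h5, mul_one] at h0
      have hc : Real.sign (X i0 i) = Real.sign (X i i0) := by
        linear_combination Real.sign (X i i0) * h0 - Real.sign (X i0 i) * h1
      rw [hc] at h
      show Real.sign (X i j) = Real.sign (X i i0) * Real.sign (X j i0)
      linear_combination (Real.sign (X i i0) * Real.sign (X j i0)) * h -
        Real.sign (X i j) * Real.sign (X i i0) * Real.sign (X i i0) * h2 -
        Real.sign (X i j) * h1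
    have habs_s : ∀ i, |s i| = 1 := by
      intro i
      rcases Real.sign_apply_eq_of_ne_zero (X i i0) (hX i i0) with h | h <;>
        simp [hs, h]
    have hsma : ∀ (x : ℝ), Real.sign x * |x| = x := by
      intro x
      rcases lt_trichotomy x 0 with h | h | h
      · rw [Real.sign_of_neg h, abs_of_neg h]; ring
      · simp [h]
      · rw [Real.sign_of_pos h, abs_of_pos h]; ring
    have hXdecomp : ∀ i j, X i j = s i * s j * |X i j| := by
      intro i j
      conv_lhs => rw [← hsma (X i j)]
      rw [hsign]
    have hsum : ∀ i j, ∑ k, X i k * X j k = s i * s j * ∑ k, |X i k| * |X j k| := by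
      intro i j
      rw [Finset.mul_sum]
      apply Finset.sum_congr rfl
      intro k _
      have e1 := hXdecomp i k
      have e2 := hXdecomp j k
      have hk : s k * s k = 1 := hsq (X k i0) (hX k i0)
      linear_combination X j k * e1 + (s i * s k * |X i k|) * e2 +
        (s i * s j * (|X i k| * |X j k|)) * hk
    have hpos : ∀ i, 0 < ∑ k, |X i k| :=
      fun i => Finset.sum_pos (fun k _ => abs_pos.mpr (hX i k)) ⟨i0, Finset.mem_univ i0⟩
    have habsf : ∀ i j, |fHbM X i j| = (∑ k, |X i k| * |X j k|) / (∑ k, |X i k|) := by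
      intro i j
      show |(∑ k, X i k * X j k) / (∑ k, |X i k|)| = _
      rw [hsum, abs_div, abs_mul, abs_mul, habs_s i, habs_s j,
        abs_of_pos (hpos i),
        abs_of_nonneg (Finset.sum_nonneg fun k _ => mul_nonneg (abs_nonneg _) (abs_nonneg _))]
      ring
    have hmin : ∀ j k, minNorm X ≤ |X j k| := by
      intro j k
      exact le_trans (ciInf_le (Finite.bddBelow_range _) j)
        (ciInf_le (Finite.bddBelow_range _) k)
    have hmax : ∀ j k, |X j k| ≤ maxNorm X := by
      intro j k
      have h1 : |X j k| ≤ ⨆ k', |X j k'| :=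
        le_ciSup (Finite.bddAbove_range fun k' => |X j k'|) k
      have h2 : (⨆ k', |X j k'|) ≤ ⨆ j', ⨆ k', |X j' k'| :=
        le_ciSup (Finite.bddAbove_range fun j' => ⨆ k', |X j' k'|) j
      exact le_trans h1 h2
    have hlow : ∀ i j, minNorm X ≤ |fHbM X i j| := by
      intro i j
      rw [habsf, le_div_iff₀ (hpos i)]
      calc minNorm X * ∑ k, |X i k| = ∑ k, minNorm X * |X i k| := by rw [Finset.mul_sum]
        _ ≤ ∑ k, |X i k| * |X j k| := by
            apply Finset.sum_le_sum
            intro k _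
            rw [mul_comm (|X i k|)]
            exact mul_le_mul_of_nonneg_right (hmin j k) (abs_nonneg _)
    have hhigh : ∀ i j, |fHbM X i j| ≤ maxNorm X := by
      intro i j
      rw [habsf, div_le_iff₀ (hpos i)]
      calc (∑ k, |X i k| * |X j k|) ≤ ∑ k, maxNorm X * |X i k| := by
            apply Finset.sum_le_sum
            intro k _
            rw [mul_comm (maxNorm X)]
            exact mul_le_mul_of_nonneg_left (hmax j k) (abs_nonneg _)
        _ = maxNorm X * ∑ k, |X i k| := by rw [Finset.mul_sum]
    constructor
    · apply le_ciInf
      intro i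
      apply le_ciInf
      intro j
      exact hlow i j
    · apply ciSup_le
      intro i
      apply ciSup_le
      intro j
      exact hhigh i j
end

section
/- Each rank-one fixed point X* = α b bᵀ (α > 0, b ∈ {-1,+1}^n) of the homophily map f(X) = diag(|X|1_n)⁻¹ X Xᵀ is Lyapunov stable: for every ε > 0 there exists ζ > 0 such that any solution X(t+1) = f(X(t)) with max norm distance ‖X(0) − X*‖_max < ζ satisfies ‖X(t) − X*‖_max < ε for all t ≥ 0. -/
lemma maxNorm_entry_le {n : ℕ} (X : Matrix (Fin n) (Fin n) ℝ) (i j : Fin n) :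
    |X i j| ≤ maxNorm X := by
  have h1 : |X i j| ≤ ⨆ j, |X i j| :=
    le_ciSup (f := fun j => |X i j|) (Set.finite_range _).bddAbove j
  exact h1.trans (le_ciSup (f := fun i => ⨆ j, |X i j|) (Set.finite_range _).bddAbove i)

lemma maxNorm_le {n : ℕ} [Nonempty (Fin n)] (X : Matrix (Fin n) (Fin n) ℝ) {c : ℝ}
    (h : ∀ i j, |X i j| ≤ c) : maxNorm X ≤ c :=
  ciSup_le fun i => ciSup_le fun j => h i j

lemma key_step {n : ℕ} [Nonempty (Fin n)] (α d : ℝ) (hα : 0 < α) (hd : d < α)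
    (b : Fin n → ℝ) (hb : ∀ i, b i = 1 ∨ b i = -1)
    (X : Matrix (Fin n) (Fin n) ℝ)
    (h : ∀ i j, |X i j - α * b i * b j| ≤ d) :
    ∀ i j, |fHbM X i j - α * b i * b j| ≤ d := by
  intro i j
  have hb2 : ∀ p, b p * b p = 1 := fun p => by rcases hb p with h | h <;> simp [h]
  have habs : ∀ p, |b p| = 1 := fun p => by rcases hb p with h | h <;> simp [h]
  set w : Fin n → Fin n → ℝ := fun p k => b p * b k * X p k with hw
  have hwd : ∀ p k, |w p k - α| ≤ d := by
    intro p k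
    have heq : w p k - α = b p * b k * (X p k - α * b p * b k) := by
      simp only [hw]
      linear_combination (α * (b k * b k)) * hb2 p + α * hb2 k
    rw [heq, abs_mul, abs_mul, habs p, habs k, one_mul, one_mul]
    exact h p k
  have hwpos : ∀ p k, 0 < w p k := by
    intro p k
    have := abs_le.mp (hwd p k)
    linarith [this.1]
  have habsX : ∀ p k, |X p k| = w p k := by
    intro p k
    have : |X p k| = |w p k| := by
      simp only [hw, abs_mul, habs p, habs k, one_mul]
    rw [this, abs_of_pos (hwpos p k)]
  have hS : 0 < ∑ k, w i k := Finset.sum_pos (fun k _ => hwpos i k) Finset.univ_nonempty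
  have hden : (∑ k, |X i k|) = ∑ k, w i k :=
    Finset.sum_congr rfl fun k _ => habsX i k
  have hnum : (∑ k, X i k * X j k) = b i * b j * ∑ k, w i k * w j k := by
    rw [Finset.mul_sum]
    refine Finset.sum_congr rfl fun k _ => ?_
    simp only [hw]
    linear_combination (-(b j * b j * (b k * b k) * (X i k * X j k))) * hb2 i
      + (-(b k * b k * (X i k * X j k))) * hb2 j + (-(X i k * X j k)) * hb2 k
  have hval : fHbM X i j - α * b i * b j
      = b i * b j * ((∑ k, w i k * (w j k - α)) / (∑ k, w i k)) := by
    have hsum : (∑ k, w i k * (w j k - α))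
        = (∑ k, w i k * w j k) - α * ∑ k, w i k := by
      rw [Finset.mul_sum, ← Finset.sum_sub_distrib]
      exact Finset.sum_congr rfl fun k _ => by ring
    simp only [fHbM, hden, hnum, hsum]
    field_simp
  have hnumbound : |∑ k, w i k * (w j k - α)| ≤ d * ∑ k, w i k := by
    calc |∑ k, w i k * (w j k - α)| ≤ ∑ k, |w i k * (w j k - α)| :=
          Finset.abs_sum_le_sum_abs _ _
      _ = ∑ k, w i k * |w j k - α| := by
          refine Finset.sum_congr rfl fun k _ => ?_
          rw [abs_mul, abs_of_pos (hwpos i k)]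
      _ ≤ ∑ k, w i k * d := by
          refine Finset.sum_le_sum fun k _ => ?_
          exact mul_le_mul_of_nonneg_left (hwd j k) (hwpos i k).le
      _ = d * ∑ k, w i k := by rw [Finset.mul_sum]; exact Finset.sum_congr rfl fun k _ => by ring
  rw [hval, abs_mul, abs_mul, habs i, habs j, one_mul, one_mul, abs_div,
    abs_of_pos hS, div_le_iff₀ hS]
  exact hnumbound

theorem fHbM_rank_one_locally_stable {n : ℕ} (α : ℝ) (hα : 0 < α)
    (b : Fin n → ℝ) (hb : ∀ i, b i = 1 ∨ b i = -1) :
    ∀ ε > (0 : ℝ), ∃ ζ > (0 : ℝ),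
      ∀ X0 : Matrix (Fin n) (Fin n) ℝ,
        maxNorm (X0 - Matrix.of (fun i j => α * b i * b j)) < ζ →
        ∀ t : ℕ, maxNorm ((fHbM (n := n))^[t] X0 - Matrix.of (fun i j => α * b i * b j)) < ε := by
  intro ε hε
  rcases Nat.eq_zero_or_pos n with hn | hn
  · subst hn
    refine ⟨ε, hε, fun X0 _ t => ?_⟩
    simp [maxNorm, ciSup_of_empty, Real.sSup_empty, hε]
  · haveI : Nonempty (Fin n) := ⟨⟨0, hn⟩⟩
    refine ⟨min α ε, lt_min hα hε, fun X0 hX0 t => ?_⟩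
    have key : ∀ t, maxNorm ((fHbM (n := n))^[t] X0
        - Matrix.of (fun i j => α * b i * b j)) < min α ε := by
      intro t
      induction t with
      | zero => simpa using hX0
      | succ t ih =>
        set Y := (fHbM (n := n))^[t] X0 with hY
        set d := maxNorm (Y - Matrix.of (fun i j => α * b i * b j)) with hd
        have hentry : ∀ i j, |Y i j - α * b i * b j| ≤ d := by
          intro i j
          have := maxNorm_entry_le (Y - Matrix.of (fun i j => α * b i * b j)) i j
          simpa [Matrix.sub_apply] using this
        have hdα : d < α := lt_of_lt_of_le ih (min_le_left _ _)
        have hstep := key_step α d hα hdα b hb Y hentry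
        have : maxNorm ((fHbM Y) - Matrix.of (fun i j => α * b i * b j)) ≤ d := by
          refine maxNorm_le _ fun i j => ?_
          simpa [Matrix.sub_apply] using hstep i j
        rw [Function.iterate_succ_apply']
        exact lt_of_le_of_lt this ih
    exact lt_of_lt_of_le (key t) (min_le_right _ _)
end

section
/- Let X ∈ ℝ^{n×n} be sign-symmetric with positive diagonal and suppose there exists γ ∈ ℝ^n with γ ≻ 0 such that diag(γ)X is symmetric. Define g(X) = diag(|X|1_n)⁻¹ X X (assuming no zero row). Then g(X) has positive diagonal entries, is sign-symmetric, and diag(γ̃) g(X) is symmetric for γ̃ = diag(|X|1_n) γ, so the set of 'rescaled-symmetric positive-diagonal' matrices is invariant under g. -/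
noncomputable def gIbM {n : ℕ} (X : Matrix (Fin n) (Fin n) ℝ) : Matrix (Fin n) (Fin n) ℝ :=
  fun i j => (∑ k, X i k * X k j) / (∑ k, |X i k|)

private lemma sign_mul_nonneg (a b : ℝ) (h : Real.sign a = Real.sign b) : 0 ≤ a * b := by
  rcases lt_trichotomy a 0 with ha | ha | ha
  · have hb : b < 0 := by
      by_contra hb
      push_neg at hb
      rcases eq_or_lt_of_le hb with hb' | hb'
      · rw [Real.sign_of_neg ha, ← hb', Real.sign_zero] at h; norm_num at h
      · rw [Real.sign_of_neg ha, Real.sign_of_pos hb'] at h; norm_num at h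
    exact le_of_lt (mul_pos_of_neg_of_neg ha hb)
  · rw [ha, zero_mul]
  · have hb : 0 < b := by
      by_contra hb
      push_neg at hb
      rcases eq_or_lt_of_le hb with hb' | hb'
      · rw [Real.sign_of_pos ha, hb', Real.sign_zero] at h; norm_num at h
      · rw [Real.sign_of_pos ha, Real.sign_of_neg hb'] at h; norm_num at h
    exact le_of_lt (mul_pos ha hb)

private lemma sign_div_pos (x c : ℝ) (hc : 0 < c) : Real.sign (x / c) = Real.sign x := by
  rcases lt_trichotomy x 0 with hx | hx | hx
  · rw [Real.sign_of_neg hx, Real.sign_of_neg (div_neg_of_neg_of_pos hx hc)]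
  · rw [hx, zero_div]
  · rw [Real.sign_of_pos hx, Real.sign_of_pos (div_pos hx hc)]

private lemma sign_of_scaled (a b x y : ℝ) (ha : 0 < a) (hb : 0 < b)
    (h : a * x = b * y) : Real.sign x = Real.sign y := by
  rcases lt_trichotomy x 0 with hx | hx | hx
  · have : b * y < 0 := h ▸ mul_neg_of_pos_of_neg ha hx
    have hy : y < 0 := neg_of_mul_neg_left (by linarith [mul_comm b y]) hb.le
    rw [Real.sign_of_neg hx, Real.sign_of_neg hy]
  · have : b * y = 0 := by rw [← h, hx, mul_zero]
    have hy : y = 0 := by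
      rcases mul_eq_zero.mp this with h' | h'
      · exact absurd h' hb.ne'
      · exact h'
    rw [hx, hy]
  · have : 0 < b * y := h ▸ mul_pos ha hx
    have hy : 0 < y := by nlinarith
    rw [Real.sign_of_pos hx, Real.sign_of_pos hy]

theorem gIbM_invariant_rescaled_symmetric {n : ℕ} (X : Matrix (Fin n) (Fin n) ℝ)
    (hrow : ∀ i, ∃ k, X i k ≠ 0)
    (hdiag : ∀ i, 0 < X i i)
    (hsymm : ∀ i j, Real.sign (X i j) = Real.sign (X j i))
    (γ : Fin n → ℝ) (hγ : ∀ i, 0 < γ i)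
    (hγX : ∀ i j, γ i * X i j = γ j * X j i) :
    (∀ i, 0 < gIbM X i i) ∧
    (∀ i j, Real.sign (gIbM X i j) = Real.sign (gIbM X j i)) ∧
    (∀ i j, ((∑ k, |X i k|) * γ i) * gIbM X i j = ((∑ k, |X j k|) * γ j) * gIbM X j i) := by
  have hD : ∀ i, 0 < ∑ k, |X i k| := by
    intro i
    obtain ⟨k, hk⟩ := hrow i
    exact Finset.sum_pos' (fun m _ => abs_nonneg _) ⟨k, Finset.mem_univ k, abs_pos.mpr hk⟩
  have key : ∀ i j, γ i * (∑ k, X i k * X k j) = γ j * (∑ k, X j k * X k i) := by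
    intro i j
    rw [Finset.mul_sum, Finset.mul_sum]
    apply Finset.sum_congr rfl
    intro k _
    calc γ i * (X i k * X k j) = (γ i * X i k) * X k j := by ring
      _ = (γ k * X k i) * X k j := by rw [hγX i k]
      _ = (γ k * X k j) * X k i := by ring
      _ = (γ j * X j k) * X k i := by rw [hγX k j]
      _ = γ j * (X j k * X k i) := by ring
  refine ⟨?_, ?_, ?_⟩
  · intro i
    have hS : 0 < ∑ k, X i k * X i k := by
      apply Finset.sum_pos'
      · intro m _; exact mul_self_nonneg _
      · exact ⟨i, Finset.mem_univ i, mul_pos (hdiag i) (hdiag i)⟩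
    have hS2 : 0 < ∑ k, X i k * X k i := by
      apply Finset.sum_pos' (fun m _ => sign_mul_nonneg _ _ (hsymm i m))
      exact ⟨i, Finset.mem_univ i, mul_pos (hdiag i) (hdiag i)⟩
    exact div_pos hS2 (hD i)
  · intro i j
    unfold gIbM
    rw [sign_div_pos _ _ (hD i), sign_div_pos _ _ (hD j)]
    exact sign_of_scaled _ _ _ _ (hγ i) (hγ j) (key i j)
  · intro i j
    unfold gIbM
    rw [mul_div_assoc', mul_div_assoc']
    rw [div_eq_div_iff (hD i).ne' (hD j).ne']
    linear_combination (∑ k, |X i k|) * (∑ k, |X j k|) * key i j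
end

section
/- Let X ∈ ℝ^{n×n} have all entries nonzero and satisfy social balance. Then g(X) = diag(|X|1_n)⁻¹ X X satisfies sign(g(X)) = sign(X); in particular g(X) also satisfies social balance and has all entries nonzero. -/
theorem gIbM_preserves_social_balance {n : ℕ} (X : Matrix (Fin n) (Fin n) ℝ)
    (hX : ∀ i j, X i j ≠ 0)
    (hdiag : ∀ i, 0 < X i i)
    (hbal : ∀ i j k, Real.sign (X i j) * Real.sign (X j k) * Real.sign (X k i) = 1) :
    (∀ i j, Real.sign (gIbM X i j) = Real.sign (X i j)) ∧
    (∀ i j, gIbM X i j ≠ 0) ∧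
    (∀ i, 0 < gIbM X i i) ∧
    (∀ i j k, Real.sign (gIbM X i j) * Real.sign (gIbM X j k) * Real.sign (gIbM X k i) = 1) := by
  -- each term X i k * X k j has the same sign as X i j
  have key : ∀ i j k, (0 < X i j → 0 < X i k * X k j) ∧ (X i j < 0 → X i k * X k j < 0) := by
    intro i j k
    have h1 := hbal i k j
    have h2 := hbal i j j
    have hjj : Real.sign (X j j) = 1 := Real.sign_of_pos (hdiag j)
    rcases (hX i k).lt_or_gt with hik | hik <;>
    rcases (hX k j).lt_or_gt with hkj | hkj <;>
    rcases (hX i j).lt_or_gt with hij | hij <;>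
    rcases (hX j i).lt_or_gt with hji | hji <;>
    simp_all [Real.sign_of_pos, Real.sign_of_neg] <;>
    first
      | (constructor <;> first | nlinarith | (intro h; nlinarith))
      | nlinarith
      | (intro h; nlinarith)
  have hden : ∀ i, (0:ℝ) < ∑ k, |X i k| := by
    intro i
    apply Finset.sum_pos
    · intro k _
      exact abs_pos.mpr (hX i k)
    · exact ⟨i, Finset.mem_univ i⟩
  have hsign : ∀ i j, (0 < X i j → 0 < gIbM X i j) ∧ (X i j < 0 → gIbM X i j < 0) := by
    intro i j
    constructor <;> intro h
    · apply div_pos _ (hden i)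
      exact Finset.sum_pos (fun k _ => (key i j k).1 h) ⟨i, Finset.mem_univ i⟩
    · apply div_neg_of_neg_of_pos _ (hden i)
      exact Finset.sum_neg (fun k _ => (key i j k).2 h) ⟨i, Finset.mem_univ i⟩
  have hmain : ∀ i j, Real.sign (gIbM X i j) = Real.sign (X i j) := by
    intro i j
    rcases (hX i j).lt_or_gt with hij | hij
    · rw [Real.sign_of_neg hij, Real.sign_of_neg ((hsign i j).2 hij)]
    · rw [Real.sign_of_pos hij, Real.sign_of_pos ((hsign i j).1 hij)]
  refine ⟨hmain, ?_, fun i => (hsign i i).1 (hdiag i), ?_⟩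
  · intro i j
    rcases (hX i j).lt_or_gt with hij | hij
    · exact ne_of_lt ((hsign i j).2 hij)
    · exact ne_of_gt ((hsign i j).1 hij)
  · intro i j k
    rw [hmain, hmain, hmain]
    exact hbal i j k
end

section
/- Let X(t) evolve under the influence dynamics X(t+1) = diag(|X(t)|1_n)⁻¹ X(t)² with X(t₀) having all entries nonzero and satisfying social balance. Then for each fixed column j and all t ≥ t₀: max_ℓ |X_ℓj(t+1)| − min_ℓ |X_ℓj(t+1)| ≤ (1 − m₀/(n M₀)) (max_ℓ |X_ℓj(t)| − min_ℓ |X_ℓj(t)|), where m₀ = min_{i,j}|X_ij(t₀)| and M₀ = max_{i,j}|X_ij(t₀)|; hence each column's entrywise absolute values converge exponentially to a common value and X(t) converges to a matrix of the form sign(w)wᵀ. -/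
lemma sign_mul_abs' (x : ℝ) : Real.sign x * |x| = x := by
  rcases lt_trichotomy x 0 with h|h|h
  · rw [Real.sign_of_neg h, abs_of_neg h]; ring
  · simp [h]
  · rw [Real.sign_of_pos h, abs_of_pos h]; ring

section Aux
variable {n : ℕ}

lemma gibm_props (s : Fin n → ℝ) (hs : ∀ i, s i = 1 ∨ s i = -1)
    (Z : Matrix (Fin n) (Fin n) ℝ) (hZ : ∀ i j, Z i j = s i * s j * |Z i j|) :
    (∀ i j, |gIbM Z i j| = (∑ k, |Z i k| * |Z k j|) / (∑ k, |Z i k|)) ∧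
    (∀ i j, gIbM Z i j = s i * s j * |gIbM Z i j|) := by
  have heq : ∀ i j, gIbM Z i j = s i * s j * ((∑ k, |Z i k| * |Z k j|) / (∑ k, |Z i k|)) := by
    intro i j
    have hnum : (∑ k, Z i k * Z k j) = s i * s j * ∑ k, |Z i k| * |Z k j| := by
      rw [Finset.mul_sum]
      refine Finset.sum_congr rfl fun k _ => ?_
      have hk2 : s k * s k = 1 := by rcases hs k with h|h <;> rw [h] <;> ring
      calc Z i k * Z k j = (s i * s k * |Z i k|) * (s k * s j * |Z k j|) := by
            rw [← hZ i k, ← hZ k j]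
        _ = (s k * s k) * (s i * s j * (|Z i k| * |Z k j|)) := by ring
        _ = s i * s j * (|Z i k| * |Z k j|) := by rw [hk2]; ring
    unfold gIbM
    rw [hnum, mul_div_assoc]
  have hQ : ∀ i j, 0 ≤ (∑ k, |Z i k| * |Z k j|) / (∑ k, |Z i k|) := fun i j =>
    div_nonneg (Finset.sum_nonneg fun k _ => mul_nonneg (abs_nonneg _) (abs_nonneg _))
      (Finset.sum_nonneg fun k _ => abs_nonneg _)
  have habs : ∀ i j, |gIbM Z i j| = (∑ k, |Z i k| * |Z k j|) / (∑ k, |Z i k|) := by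
    intro i j
    rw [heq i j, abs_mul, abs_mul, abs_of_nonneg (hQ i j)]
    have h1 : |s i| = 1 := by rcases hs i with h|h <;> rw [h] <;> norm_num
    have h2 : |s j| = 1 := by rcases hs j with h|h <;> rw [h] <;> norm_num
    rw [h1, h2]; ring
  exact ⟨habs, fun i j => by rw [habs i j, heq i j]⟩

lemma gibm_contraction (hn : 0 < n) (Z : Matrix (Fin n) (Fin n) ℝ) (m M : ℝ) (hm : 0 < m)
    (hml : ∀ i j, m ≤ |Z i j|) (hmu : ∀ i j, |Z i j| ≤ M) (j : Fin n)
    (habs : ∀ i, |gIbM Z i j| = (∑ k, |Z i k| * |Z k j|) / (∑ k, |Z i k|)) :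
    (∀ i, (⨅ l, |Z l j|) ≤ |gIbM Z i j| ∧ |gIbM Z i j| ≤ ⨆ l, |Z l j|) ∧
    (⨆ l, |gIbM Z l j|) - (⨅ l, |gIbM Z l j|) ≤
      (1 - m / ((n : ℝ) * M)) * ((⨆ l, |Z l j|) - (⨅ l, |Z l j|)) := by
  haveI : Nonempty (Fin n) := ⟨⟨0, hn⟩⟩
  have hMpos : 0 < M := hm.trans_le ((hml ⟨0,hn⟩ ⟨0,hn⟩).trans (hmu ⟨0,hn⟩ ⟨0,hn⟩))
  have hnM : (0:ℝ) < (n:ℝ) * M := by positivity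
  set S := ⨆ l, |Z l j| with hS
  set I := ⨅ l, |Z l j| with hI
  have hbb : BddAbove (Set.range fun l => |Z l j|) := Set.Finite.bddAbove (Set.finite_range _)
  have hbi : BddBelow (Set.range fun l => |Z l j|) := Set.Finite.bddBelow (Set.finite_range _)
  have hvS : ∀ l, |Z l j| ≤ S := fun l => le_ciSup hbb l
  have hvI : ∀ l, I ≤ |Z l j| := fun l => ciInf_le hbi l
  have hIS : I ≤ S := (hvI ⟨0,hn⟩).trans (hvS ⟨0,hn⟩)
  obtain ⟨k0, hk0⟩ : ∃ k0, ∀ l, |Z k0 j| ≤ |Z l j| := Finite.exists_min _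
  have hIk0 : I = |Z k0 j| := le_antisymm (hvI k0) (le_ciInf hk0)
  have hR : ∀ i, 0 < ∑ k, |Z i k| := fun i =>
    Finset.sum_pos (fun k _ => hm.trans_le (hml i k)) Finset.univ_nonempty
  have hRM : ∀ i, (∑ k, |Z i k|) ≤ (n:ℝ) * M := by
    intro i
    calc (∑ k, |Z i k|) ≤ ∑ _k : Fin n, M := Finset.sum_le_sum fun k _ => hmu i k
      _ = (n:ℝ) * M := by
          rw [Finset.sum_const, Finset.card_univ, Fintype.card_fin, nsmul_eq_mul]
  set ε := m / ((n:ℝ) * M) with hε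
  have hεpos : 0 < ε := by positivity
  have hεle : ∀ i, ε * (∑ k, |Z i k|) ≤ |Z i k0| := by
    intro i
    have : ε ≤ |Z i k0| / (∑ k, |Z i k|) :=
      div_le_div₀ (abs_nonneg _) (hml i k0) (hR i) (hRM i)
    exact (le_div_iff₀ (hR i)).mp this
  have hlow : ∀ i, I ≤ |gIbM Z i j| := by
    intro i
    rw [habs i, le_div_iff₀ (hR i)]
    calc I * (∑ k, |Z i k|) = ∑ k, |Z i k| * I := by
          rw [Finset.mul_sum]; exact Finset.sum_congr rfl fun k _ => mul_comm _ _
      _ ≤ ∑ k, |Z i k| * |Z k j| :=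
          Finset.sum_le_sum fun k _ => mul_le_mul_of_nonneg_left (hvI k) (abs_nonneg _)
  have hup : ∀ i, |gIbM Z i j| ≤ S - ε * (S - I) := by
    intro i
    rw [habs i, div_le_iff₀ (hR i)]
    have hsum : ∑ k, |Z i k| * |Z k j| ≤ (∑ k, |Z i k|) * S - |Z i k0| * (S - I) := by
      have h1 : ∑ k, |Z i k| * |Z k j| =
          (∑ k, |Z i k| * S) - ∑ k, |Z i k| * (S - |Z k j|) := by
        rw [← Finset.sum_sub_distrib]
        exact Finset.sum_congr rfl fun k _ => by ring
      have h2 : |Z i k0| * (S - I) ≤ ∑ k, |Z i k| * (S - |Z k j|) := by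
        rw [hIk0]
        exact Finset.single_le_sum
          (fun k _ => mul_nonneg (abs_nonneg _) (sub_nonneg.mpr (hvS k))) (Finset.mem_univ k0)
      have h3 : (∑ k, |Z i k| * S) = (∑ k, |Z i k|) * S := by rw [Finset.sum_mul]
      linarith
    have h4 : ε * (∑ k, |Z i k|) * (S - I) ≤ |Z i k0| * (S - I) :=
      mul_le_mul_of_nonneg_right (hεle i) (by linarith)
    have h5 : (S - ε * (S - I)) * (∑ k, |Z i k|) =
        (∑ k, |Z i k|) * S - ε * (∑ k, |Z i k|) * (S - I) := by ring
    linarith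
  have hboth : ∀ i, I ≤ |gIbM Z i j| ∧ |gIbM Z i j| ≤ S := by
    intro i
    refine ⟨hlow i, (hup i).trans ?_⟩
    nlinarith [hεpos.le, hIS]
  refine ⟨hboth, ?_⟩
  have hsup' : (⨆ l, |gIbM Z l j|) ≤ S - ε * (S - I) := ciSup_le hup
  have hinf' : I ≤ ⨅ l, |gIbM Z l j| := le_ciInf hlow
  have : (1 - ε) * (S - I) = (S - ε * (S - I)) - I := by ring
  linarith

lemma base_sign (hn : 0 < n) (X : Matrix (Fin n) (Fin n) ℝ)
    (hX : ∀ i j, X i j ≠ 0)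
    (hdiag : ∀ i, 0 < X i i)
    (hbal : ∀ i j k, Real.sign (X i j) * Real.sign (X j k) * Real.sign (X k i) = 1) :
    ∀ i j, Real.sign (X i j) = Real.sign (X i ⟨0,hn⟩) * Real.sign (X j ⟨0,hn⟩) := by
  have hsymm : ∀ a b, Real.sign (X a b) = Real.sign (X b a) := by
    intro a b
    have h := hbal a b a
    rw [Real.sign_of_pos (hdiag a), mul_one] at h
    rcases Real.sign_apply_eq_of_ne_zero _ (hX a b) with h1|h1 <;>
      rcases Real.sign_apply_eq_of_ne_zero _ (hX b a) with h2|h2 <;>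
      rw [h1, h2] at h ⊢
    all_goals (revert h; norm_num)
  intro i j
  have h := hbal i j ⟨0,hn⟩
  rw [hsymm ⟨0,hn⟩ i] at h
  rcases Real.sign_apply_eq_of_ne_zero _ (hX i j) with h1|h1 <;>
    rcases Real.sign_apply_eq_of_ne_zero _ (hX i ⟨0,hn⟩) with h2|h2 <;>
    rcases Real.sign_apply_eq_of_ne_zero _ (hX j ⟨0,hn⟩) with h3|h3 <;>
    rw [h1, h2, h3] at h ⊢
  all_goals (revert h; norm_num)

end Aux

theorem gIbM_column_contraction_and_convergence {n : ℕ} (X : Matrix (Fin n) (Fin n) ℝ)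
    (hX : ∀ i j, X i j ≠ 0)
    (hdiag : ∀ i, 0 < X i i)
    (hbal : ∀ i j k, Real.sign (X i j) * Real.sign (X j k) * Real.sign (X k i) = 1) :
    (∀ j : Fin n, ∀ t : ℕ,
      (⨆ l, |(gIbM (n := n))^[t + 1] X l j|) - (⨅ l, |(gIbM (n := n))^[t + 1] X l j|) ≤
        (1 - minNorm X / ((n : ℝ) * maxNorm X)) *
          ((⨆ l, |(gIbM (n := n))^[t] X l j|) - (⨅ l, |(gIbM (n := n))^[t] X l j|))) ∧
    (∃ w : Fin n → ℝ, (∀ i, w i ≠ 0) ∧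
      Filter.Tendsto (fun t : ℕ => (gIbM (n := n))^[t] X) Filter.atTop
        (nhds (fun i j => Real.sign (w i) * w j))) := by
  rcases Nat.eq_zero_or_pos n with hn0 | hn
  · subst hn0
    refine ⟨fun j => j.elim0, Fin.elim0, fun i => i.elim0, ?_⟩
    have h : (fun t : ℕ => (gIbM (n := 0))^[t] X) =
        fun _ => (fun i j => Real.sign (Fin.elim0 i) * Fin.elim0 j) := by
      funext t i; exact i.elim0
    rw [h]
    exact tendsto_const_nhds
  haveI : Nonempty (Fin n) := ⟨⟨0, hn⟩⟩
  obtain ⟨s, hsdef⟩ : ∃ s : Fin n → ℝ, s = fun i => Real.sign (X i ⟨0,hn⟩) := ⟨_, rfl⟩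
  have hs : ∀ i, s i = 1 ∨ s i = -1 := by
    intro i; rw [hsdef]
    exact (Real.sign_apply_eq_of_ne_zero _ (hX i ⟨0,hn⟩)).symm
  have hXs : ∀ i j, X i j = s i * s j * |X i j| := by
    intro i j
    conv_lhs => rw [← sign_mul_abs' (X i j)]
    rw [base_sign hn X hX hdiag hbal i j, hsdef]
  set m := minNorm X with hmdef
  set M := maxNorm X with hMdef
  have hml0 : ∀ i j, m ≤ |X i j| := by
    intro i j
    refine le_trans (ciInf_le (Set.Finite.bddBelow (Set.finite_range fun i => ⨅ j, |X i j|)) i) ?_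
    exact ciInf_le (Set.Finite.bddBelow (Set.finite_range fun j => |X i j|)) j
  have hmu0 : ∀ i j, |X i j| ≤ M := by
    intro i j
    refine le_trans (le_ciSup (Set.Finite.bddAbove (Set.finite_range fun j => |X i j|)) j) ?_
    exact le_ciSup (Set.Finite.bddAbove (Set.finite_range fun i => ⨆ j, |X i j|)) i
  have hm0 : 0 < m := by
    have hinnerpos : ∀ i, 0 < ⨅ j, |X i j| := by
      intro i
      obtain ⟨j0, hj0⟩ : ∃ j0, ∀ y, |X i j0| ≤ |X i y| := Finite.exists_min _
      exact lt_of_lt_of_le (abs_pos.mpr (hX i j0)) (le_ciInf hj0)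
    obtain ⟨i1, hi1⟩ : ∃ i1, ∀ y, (⨅ j, |X i1 j|) ≤ ⨅ j, |X y j| := Finite.exists_min _
    exact lt_of_lt_of_le (hinnerpos i1) (le_ciInf hi1)
  -- main invariant
  have key : ∀ t, (∀ i j, (gIbM (n := n))^[t] X i j = s i * s j * |(gIbM (n := n))^[t] X i j|) ∧
      (∀ i j, m ≤ |(gIbM (n := n))^[t] X i j| ∧ |(gIbM (n := n))^[t] X i j| ≤ M) := by
    intro t
    induction t with
    | zero =>
      simp only [Function.iterate_zero, id_eq]
      exact ⟨hXs, fun i j => ⟨hml0 i j, hmu0 i j⟩⟩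
    | succ t ih =>
      obtain ⟨hsign, hbdd⟩ := ih
      obtain ⟨habs, hsign'⟩ := gibm_props s hs _ hsign
      simp only [Function.iterate_succ_apply']
      refine ⟨hsign', fun i j => ?_⟩
      obtain ⟨hc, _⟩ := gibm_contraction hn _ m M hm0 (fun a b => (hbdd a b).1)
        (fun a b => (hbdd a b).2) j (fun i => habs i j)
      obtain ⟨h1, h2⟩ := hc i
      exact ⟨(le_ciInf fun l => (hbdd l j).1).trans h1,
        h2.trans (ciSup_le fun l => (hbdd l j).2)⟩
  -- part 1
  have part1 : ∀ j : Fin n, ∀ t : ℕ,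
      (⨆ l, |(gIbM (n := n))^[t + 1] X l j|) - (⨅ l, |(gIbM (n := n))^[t + 1] X l j|) ≤
        (1 - m / ((n : ℝ) * M)) *
          ((⨆ l, |(gIbM (n := n))^[t] X l j|) - (⨅ l, |(gIbM (n := n))^[t] X l j|)) := by
    intro j t
    obtain ⟨hsign, hbdd⟩ := key t
    obtain ⟨habs, _⟩ := gibm_props s hs _ hsign
    have h := (gibm_contraction hn _ m M hm0 (fun a b => (hbdd a b).1)
      (fun a b => (hbdd a b).2) j (fun i => habs i j)).2
    simpa only [Function.iterate_succ_apply'] using h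
  refine ⟨part1, ?_⟩
  -- part 2 : convergence
  have hM0 : 0 < M := hm0.trans_le ((hml0 ⟨0,hn⟩ ⟨0,hn⟩).trans (hmu0 ⟨0,hn⟩ ⟨0,hn⟩))
  have hnM : (0:ℝ) < (n:ℝ) * M := by positivity
  set r := 1 - m / ((n : ℝ) * M) with hrdef
  have hr0 : 0 ≤ r := by
    have h1 : m / ((n:ℝ) * M) ≤ 1 := by
      rw [div_le_one hnM]
      calc m ≤ M := (hml0 ⟨0,hn⟩ ⟨0,hn⟩).trans (hmu0 ⟨0,hn⟩ ⟨0,hn⟩)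
        _ = 1 * M := (one_mul M).symm
        _ ≤ (n:ℝ) * M := by
            apply mul_le_mul_of_nonneg_right _ hM0.le
            exact_mod_cast hn
    rw [hrdef]; linarith
  have hr1 : r < 1 := by
    have : 0 < m / ((n:ℝ) * M) := by positivity
    rw [hrdef]; linarith
  have colConv : ∀ j : Fin n, ∃ L : ℝ, m ≤ L ∧
      ∀ i, Filter.Tendsto (fun t => |(gIbM (n := n))^[t] X i j|) Filter.atTop (nhds L) := by
    intro j
    set v : ℕ → Fin n → ℝ := fun t l => |(gIbM (n := n))^[t] X l j| with hv
    set Ms : ℕ → ℝ := fun t => ⨆ l, v t l with hMs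
    set ms : ℕ → ℝ := fun t => ⨅ l, v t l with hms
    have hbb : ∀ t, BddAbove (Set.range (v t)) := fun t => Set.Finite.bddAbove (Set.finite_range _)
    have hbi : ∀ t, BddBelow (Set.range (v t)) := fun t => Set.Finite.bddBelow (Set.finite_range _)
    have hle : ∀ t l, v t l ≤ Ms t := fun t l => le_ciSup (hbb t) l
    have hge : ∀ t l, ms t ≤ v t l := fun t l => ciInf_le (hbi t) l
    have hmsM : ∀ t, ms t ≤ Ms t := fun t => (hge t ⟨0,hn⟩).trans (hle t ⟨0,hn⟩)
    have hstep : ∀ t, (∀ i, ms t ≤ v (t+1) i ∧ v (t+1) i ≤ Ms t) ∧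
        Ms (t+1) - ms (t+1) ≤ r * (Ms t - ms t) := by
      intro t
      obtain ⟨hsign, hbdd⟩ := key t
      obtain ⟨habs, _⟩ := gibm_props s hs _ hsign
      have hc := gibm_contraction hn _ m M hm0 (fun a b => (hbdd a b).1)
        (fun a b => (hbdd a b).2) j (fun i => habs i j)
      constructor
      · intro i
        have h := hc.1 i
        simp only [hv, hms, hMs, Function.iterate_succ_apply']
        exact ⟨h.1, h.2⟩
      · have h := hc.2
        simp only [hv, hms, hMs, hrdef, Function.iterate_succ_apply']
        exact h
    have hManti : Antitone Ms :=
      antitone_nat_of_succ_le fun t => ciSup_le fun l => ((hstep t).1 l).2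
    have hMlb : ∀ t, m ≤ Ms t := fun t =>
      (((key t).2 ⟨0,hn⟩ j).1).trans (hle t ⟨0,hn⟩)
    have hMbdd : BddBelow (Set.range Ms) := ⟨m, by rintro x ⟨t, rfl⟩; exact hMlb t⟩
    have hMtend : Filter.Tendsto Ms Filter.atTop (nhds (⨅ t, Ms t)) :=
      tendsto_atTop_ciInf hManti hMbdd
    set L := ⨅ t, Ms t with hL
    have hdle : ∀ t, Ms t - ms t ≤ r ^ t * (Ms 0 - ms 0) := by
      intro t
      induction t with
      | zero => simp
      | succ t ih =>
        calc Ms (t+1) - ms (t+1) ≤ r * (Ms t - ms t) := (hstep t).2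
          _ ≤ r * (r ^ t * (Ms 0 - ms 0)) := mul_le_mul_of_nonneg_left ih hr0
          _ = r ^ (t+1) * (Ms 0 - ms 0) := by ring
    have hdtend : Filter.Tendsto (fun t => Ms t - ms t) Filter.atTop (nhds 0) := by
      refine squeeze_zero (fun t => sub_nonneg.mpr (hmsM t)) hdle ?_
      have := (tendsto_pow_atTop_nhds_zero_of_lt_one hr0 hr1).mul_const (Ms 0 - ms 0)
      simpa using this
    have hmtend : Filter.Tendsto ms Filter.atTop (nhds L) := by
      have heq : ms = fun t => Ms t - (Ms t - ms t) := funext fun t => by ring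
      rw [heq]
      simpa using hMtend.sub hdtend
    have hLm : m ≤ L := ge_of_tendsto' hMtend hMlb
    refine ⟨L, hLm, fun i => ?_⟩
    exact tendsto_of_tendsto_of_tendsto_of_le_of_le hmtend hMtend
      (fun t => hge t i) (fun t => hle t i)
  choose L hLm hLtend using colConv
  refine ⟨fun j => s j * L j, fun i => ?_, ?_⟩
  · exact mul_ne_zero (by rcases hs i with h|h <;> rw [h] <;> norm_num)
      (hm0.trans_le (hLm i)).ne'
  · refine tendsto_pi_nhds.2 ?_
    intro i
    rw [tendsto_pi_nhds]
    intro j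
    have hLpos : 0 < L i := hm0.trans_le (hLm i)
    have hsw : Real.sign (s i * L i) = s i := by
      rcases hs i with h|h <;> rw [h]
      · rw [one_mul, Real.sign_of_pos hLpos]
      · rw [neg_one_mul, Real.sign_neg, Real.sign_of_pos hLpos]
    show Filter.Tendsto (fun t => (gIbM (n := n))^[t] X i j) Filter.atTop
      (nhds (Real.sign (s i * L i) * (s j * L j)))
    rw [hsw]
    have hval : ∀ t, (gIbM (n := n))^[t] X i j = s i * s j * |(gIbM (n := n))^[t] X i j| :=
      fun t => (key t).1 i j
    have htend : Filter.Tendsto (fun t => s i * s j * |(gIbM (n := n))^[t] X i j|)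
        Filter.atTop (nhds (s i * s j * L j)) := ((hLtend j) i).const_mul _
    have heq : s i * (s j * L j) = s i * s j * L j := by ring
    rw [heq]
    exact htend.congr fun t => (hval t).symm
end
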